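/- Let f, g ∈ QP_{≫0} with g(n) > 0 for all sufficiently large n. Then both the quotient function n ↦ ⌊f(n)/g(n)⌋ and the remainder function n ↦ f(n) − g(n)·⌊f(n)/g(n)⌋ are in QP_{≫0}. -/

import Mathlib

/-!
On a common period `s` of `f` and `g`, each residue class mod `s` carries polynomials `p, q`
with `f = p`, `g = q` there, and `q` is eventually positive because it is positive infinitely
often. Dividing, `p = q * Q + R` with `deg R < deg q`, and clearing denominators,
`D * Q = P ∈ ℤ[X]`; then `p(n) / q(n) = (P(n) + D R(n) / q(n)) / D`. The error `D R(n) / q(n)`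
tends to `0` with eventually constant sign, so its floor is eventually a constant `k`, and
`⌊p(n) / q(n)⌋ = (P(n) + k) / D` (integer division), which is quasi-polynomial because
`P(n) mod D` is `D`-periodic in `n`. The remainder `f - g ⌊f / g⌋` is then quasi-polynomial
because `QP_{≫0}` is closed under differences and products.
-/

/-- A function `f : ℤ → ℤ` is *eventually quasi-polynomial* if there exist a positive
integer `s`, polynomials `c 0, …, c (s-1) ∈ ℚ[x]`, and an integer `N` such that for all
`n ≥ N`, `f n = (c i).eval n` where `i` is the residue of `n` modulo `s`. -/
def IsEQP (f : ℤ → ℤ) : Prop :=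
  ∃ s : ℕ, 0 < s ∧ ∃ (c : ℕ → Polynomial ℚ) (N : ℤ),
    ∀ n : ℤ, N ≤ n → (f n : ℚ) = (c (n % (s : ℤ)).toNat).eval (n : ℚ)

open Polynomial Filter Function Topology

namespace Function.Periodic

variable {β : Type*} {f : ℤ → β}

theorem of_dvd {c d : ℤ} (h : Periodic f c) (hcd : c ∣ d) : Periodic f d := by
  obtain ⟨k, rfl⟩ := hcd
  simpa [mul_comm] using h.int_mul k

theorem map_emod {c : ℤ} (h : Periodic f c) (n : ℤ) : f (n % c) = f n := by
  rw [Int.emod_def, mul_comm]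
  exact h.sub_int_mul_eq _

end Function.Periodic

theorem exists_eventually_floor_eq_of_tendsto_zero {α K : Type*} [Field K] [LinearOrder K]
    [IsStrictOrderedRing K] [FloorRing K] [TopologicalSpace K] [OrderTopology K]
    {l : Filter α} {e : α → K} (he : Tendsto e l (𝓝 0))
    (hsign : (∀ᶠ x in l, 0 ≤ e x) ∨ ∀ᶠ x in l, e x < 0) : ∃ k : ℤ, ∀ᶠ x in l, ⌊e x⌋ = k := by
  rcases hsign with h | h
  · refine ⟨0, (h.and (he.eventually_lt_const one_pos)).mono fun x hx => ?_⟩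
    exact Int.floor_eq_zero_iff.2 hx
  · refine ⟨-1, (h.and (he.eventually_const_lt neg_one_lt_zero)).mono fun x hx => ?_⟩
    exact Int.floor_eq_iff.2 ⟨by simpa using hx.2.le, by simpa using hx.1⟩

namespace Polynomial

variable {𝕜 : Type*} [NormedField 𝕜] [LinearOrder 𝕜] [IsStrictOrderedRing 𝕜] [OrderTopology 𝕜]
  {P : 𝕜[X]}

theorem eventually_atTop_pos_of_leadingCoeff_pos (h : 0 < P.leadingCoeff) :
    ∀ᶠ x in atTop, 0 < P.eval x := by
  rcases lt_or_ge 0 P.degree with hdeg | hdeg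
  · exact (P.tendsto_atTop_of_leadingCoeff_nonneg hdeg h.le).eventually_gt_atTop 0
  · rw [eq_C_of_degree_le_zero hdeg] at h ⊢
    exact .of_forall fun _ => by simpa using h

theorem eventually_atTop_pos_of_frequently_pos (h : ∃ᶠ x in atTop, 0 < P.eval x) :
    ∀ᶠ x in atTop, 0 < P.eval x := by
  rcases lt_trichotomy P.leadingCoeff 0 with hlc | hlc | hlc
  · have hneg := eventually_atTop_pos_of_leadingCoeff_pos (P := -P) (by simpa using hlc)
    exact absurd h (not_frequently.2 (hneg.mono fun x hx => by simp at hx; linarith))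
  · simp [leadingCoeff_eq_zero.1 hlc] at h
  · exact eventually_atTop_pos_of_leadingCoeff_pos hlc

theorem eventually_atTop_nonneg_or_neg (P : 𝕜[X]) :
    (∀ᶠ x in atTop, 0 ≤ P.eval x) ∨ ∀ᶠ x in atTop, P.eval x < 0 := by
  by_cases h : ∃ᶠ x in atTop, 0 < (-P).eval x
  · exact .inr ((eventually_atTop_pos_of_frequently_pos h).mono fun x hx => by simpa using hx)
  · exact .inl ((not_frequently.1 h).mono fun x hx => by simpa using hx)

theorem exists_eventually_floor_eval_div_eq [FloorRing 𝕜] {R q : 𝕜[X]}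
    (hdeg : R.degree < q.degree) (hq : ∀ᶠ x in atTop, 0 < q.eval x) :
    ∃ k : ℤ, ∀ᶠ x in atTop, ⌊R.eval x / q.eval x⌋ = k := by
  refine exists_eventually_floor_eq_of_tendsto_zero
    (div_tendsto_atTop_zero_of_degree_lt R q hdeg) ?_
  refine R.eventually_atTop_nonneg_or_neg.imp (fun hR => ?_) fun hR => ?_
  · filter_upwards [hR, hq] with x hRx hqx using div_nonneg hRx hqx.le
  · filter_upwards [hR, hq] with x hRx hqx using div_neg_of_neg_of_pos hRx hqx

theorem exists_map_intCast_eq_smul (Q : ℚ[X]) :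
    ∃ D : ℕ, 0 < D ∧ ∃ P : ℤ[X], P.map (Int.castRingHom ℚ) = (D : ℚ) • Q := by
  obtain ⟨b, hb, hP⟩ := IsLocalization.integerNormalization_spec (nonZeroDivisors ℤ) Q
  refine ⟨b.natAbs, Int.natAbs_pos.2 (nonZeroDivisors.ne_zero hb),
    b.sign • IsLocalization.integerNormalization (nonZeroDivisors ℤ) Q, ?_⟩
  rw [Polynomial.map_smul, ← algebraMap_int_eq, hP, algebraMap_int_eq, eq_intCast,
    Int.cast_smul_eq_zsmul, smul_smul, Int.sign_mul_self_eq_natAbs, natCast_zsmul,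
    Nat.cast_smul_eq_nsmul]

end Polynomial

theorem isEQP_iff {f : ℤ → ℤ} :
    IsEQP f ↔ ∃ P : ℤ → ℚ[X], (∃ s : ℕ, 0 < s ∧ Periodic P s) ∧
      ∀ᶠ n in atTop, (f n : ℚ) = (P n).eval (n : ℚ) := by
  constructor
  · rintro ⟨s, hs, c, N, h⟩
    exact ⟨fun n => c (n % s).toNat, ⟨s, hs, fun n => by simp⟩, eventually_atTop.2 ⟨N, h⟩⟩
  · rintro ⟨P, ⟨s, hs, hP⟩, h⟩
    obtain ⟨N, hN⟩ := eventually_atTop.1 h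
    refine ⟨s, hs, fun k => P k, N, fun n hn => ?_⟩
    dsimp only
    rw [hN n hn, Int.toNat_of_nonneg (Int.emod_nonneg _ (by omega)), hP.map_emod]

namespace IsEQP

variable {f g : ℤ → ℤ}

theorem congr (hg : IsEQP g) (hfg : f =ᶠ[atTop] g) : IsEQP f := by
  obtain ⟨P, hP, hgP⟩ := isEQP_iff.1 hg
  exact isEQP_iff.2 ⟨P, hP, hfg.mp (hgP.mono fun n h hfg => by rw [hfg, h])⟩

theorem exists_common_period (hf : IsEQP f) (hg : IsEQP g) :
    ∃ s : ℕ, 0 < s ∧ ∃ P Q : ℤ → ℚ[X], Periodic P s ∧ Periodic Q s ∧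
      ∀ᶠ n in atTop, (f n : ℚ) = (P n).eval (n : ℚ) ∧ (g n : ℚ) = (Q n).eval (n : ℚ) := by
  obtain ⟨P, ⟨s, hs, hP⟩, hfP⟩ := isEQP_iff.1 hf
  obtain ⟨Q, ⟨t, ht, hQ⟩, hgQ⟩ := isEQP_iff.1 hg
  refine ⟨s * t, Nat.mul_pos hs ht, P, Q, hP.of_dvd ?_, hQ.of_dvd ?_, hfP.and hgQ⟩ <;>
    exact Int.natCast_dvd_natCast.2 (by simp)

theorem sub (hf : IsEQP f) (hg : IsEQP g) : IsEQP fun n => f n - g n := by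
  obtain ⟨s, hs, P, Q, hP, hQ, hfg⟩ := hf.exists_common_period hg
  exact isEQP_iff.2 ⟨P - Q, ⟨s, hs, hP.sub hQ⟩, hfg.mono fun n h => by simp [h.1, h.2]⟩

theorem mul (hf : IsEQP f) (hg : IsEQP g) : IsEQP fun n => f n * g n := by
  obtain ⟨s, hs, P, Q, hP, hQ, hfg⟩ := hf.exists_common_period hg
  exact isEQP_iff.2 ⟨P * Q, ⟨s, hs, hP.mul hQ⟩, hfg.mono fun n h => by simp [h.1, h.2]⟩

end IsEQP

theorem isEQP_eval_ediv (P : ℤ[X]) {D : ℕ} (hD : 0 < D) : IsEQP fun n => P.eval n / D := by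
  refine isEQP_iff.2 ⟨fun n => C (D : ℚ)⁻¹ *
    (P.map (Int.castRingHom ℚ) - C ((P.eval n % D : ℤ) : ℚ)), ⟨D, hD, fun n => ?_⟩,
    .of_forall fun n => ?_⟩
  · have hmod : P.eval (n + D) % D = P.eval n % D :=
      (Int.modEq_iff_dvd.2 (by simpa using sub_dvd_eval_sub (n + D) n P)).symm
    simp only [hmod]
  · have hD' : (D : ℚ) ≠ 0 := by exact_mod_cast hD.ne'
    simp only [eval_mul, eval_C, eval_sub, eval_intCast_map, eq_intCast, Int.emod_def]
    push_cast
    field_simp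
    ring

theorem isEQP_floor_eval_div (p q : ℚ[X]) (hq : ∀ᶠ x in atTop, 0 < q.eval x) :
    IsEQP fun n => ⌊p.eval (n : ℚ) / q.eval (n : ℚ)⌋ := by
  have hq0 : q ≠ 0 := by
    rintro rfl
    simpa using hq.exists
  obtain ⟨D, hD, P, hP⟩ := exists_map_intCast_eq_smul (p / q)
  obtain ⟨k, hk⟩ := exists_eventually_floor_eval_div_eq
    ((degree_smul_le (D : ℚ) (p % q)).trans_lt (degree_mod_lt p hq0)) hq
  refine (isEQP_eval_ediv (P + C k) hD).congr ?_
  filter_upwards [tendsto_intCast_atTop_atTop.eventually (hk.and hq)] with n ⟨hkn, hqn⟩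
  have hPn : ((P.eval n : ℤ) : ℚ) = D * (p / q).eval (n : ℚ) := by
    simpa using congrArg (Polynomial.eval (n : ℚ)) hP
  have hsplit : p.eval (n : ℚ) / q.eval (n : ℚ) =
      (((P.eval n : ℤ) : ℚ) + ((D : ℚ) • (p % q)).eval (n : ℚ) / q.eval (n : ℚ)) / D := by
    conv_lhs => rw [← EuclideanDomain.div_add_mod p q]
    have hD' : (D : ℚ) ≠ 0 := by exact_mod_cast hD.ne'
    rw [hPn, eval_add, eval_mul, eval_smul, smul_eq_mul]
    field_simp
  rw [hsplit, Int.floor_div_natCast, Int.floor_intCast_add, hkn]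
  simp

theorem isEQP_of_forall_emod {f : ℤ → ℤ} {s : ℕ} (hs : 0 < s)
    (h : ∀ j : ℤ, ∃ g, IsEQP g ∧ ∀ᶠ n in atTop, n % s = j → f n = g n) : IsEQP f := by
  choose g hg hfg using h
  choose P hP hgP using fun j => isEQP_iff.1 (hg j)
  choose c hc hper using hP
  set I := Finset.Ico (0 : ℤ) s
  have hI (n : ℤ) : n % s ∈ I :=
    Finset.mem_Ico.2 ⟨Int.emod_nonneg _ (by omega), Int.emod_lt_of_pos _ (by omega)⟩
  refine isEQP_iff.2 ⟨fun n => P (n % s) n,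
    ⟨s * ∏ j ∈ I, c j, Nat.mul_pos hs (Finset.prod_pos fun j _ => hc j), fun n => ?_⟩, ?_⟩
  · have hdvd : (c (n % s) : ℤ) ∣ ((s * ∏ j ∈ I, c j : ℕ) : ℤ) :=
      Int.natCast_dvd_natCast.2 ((Finset.dvd_prod_of_mem c (hI n)).mul_left s)
    have hmod : (n + ((s * ∏ j ∈ I, c j : ℕ) : ℤ)) % s = n % s := by
      rw [Nat.cast_mul, Int.add_mul_emod_self_left]
    simp only [hmod, (hper _).of_dvd hdvd n]
  · have hall : ∀ᶠ n in atTop, ∀ j ∈ I, (n % s = j → f n = g j n) ∧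
        (g j n : ℚ) = (P j n).eval (n : ℚ) :=
      (eventually_all_finset I).2 fun j _ => (hfg j).and (hgP j)
    filter_upwards [hall] with n hn
    obtain ⟨hfn, hgn⟩ := hn _ (hI n)
    rw [hfn rfl, hgn]

theorem Function.Periodic.eventually_eval_pos {Q : ℤ → ℚ[X]} {s : ℕ} (hQ : Periodic Q s)
    (hs : 0 < s) (h : ∀ᶠ n : ℤ in atTop, 0 < (Q n).eval (n : ℚ)) (j : ℤ) :
    ∀ᶠ x in atTop, 0 < (Q j).eval x := by
  apply eventually_atTop_pos_of_frequently_pos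
  have hlin : Tendsto (fun m : ℤ => j + m * s) atTop atTop :=
    tendsto_atTop_add_const_left _ _ (tendsto_id.atTop_mul_const' (by omega))
  have hj : ∀ᶠ m : ℤ in atTop, 0 < (Q j).eval ((j + m * s : ℤ) : ℚ) := by
    filter_upwards [hlin.eventually h] with m hm
    rwa [show Q (j + m * s) = Q j by simpa using hQ.int_mul m j] at hm
  exact (tendsto_intCast_atTop_atTop.comp hlin).frequently hj.frequently

/-- Generalized division over `QP_{≫0}`: for `f, g` eventually quasi-polynomial with
`g(n) > 0` for `n ≫ 0`, the quotient `⌊f(n)/g(n)⌋` and the remainder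
`f(n) - g(n)⌊f(n)/g(n)⌋` are eventually quasi-polynomial. -/
theorem stmt8 (f g : ℤ → ℤ) (hf : IsEQP f) (hg : IsEQP g)
    (hgpos : ∃ N : ℤ, ∀ n : ℤ, N ≤ n → 0 < g n) :
    IsEQP (fun n => ⌊((f n : ℤ) : ℚ) / ((g n : ℤ) : ℚ)⌋) ∧
    IsEQP (fun n => f n - g n * ⌊((f n : ℤ) : ℚ) / ((g n : ℤ) : ℚ)⌋) := by
  obtain ⟨s, hs, P, Q, hP, hQ, hfg⟩ := hf.exists_common_period hg
  have hQpos : ∀ᶠ n : ℤ in atTop, 0 < (Q n).eval (n : ℚ) := by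
    obtain ⟨N, hN⟩ := hgpos
    filter_upwards [hfg, eventually_ge_atTop N] with n hn hNn
    exact hn.2 ▸ Int.cast_pos.2 (hN n hNn)
  have hquot : IsEQP fun n => ⌊((f n : ℤ) : ℚ) / ((g n : ℤ) : ℚ)⌋ := by
    refine isEQP_of_forall_emod hs fun j =>
      ⟨_, isEQP_floor_eval_div (P j) (Q j) (hQ.eventually_eval_pos hs hQpos j), ?_⟩
    filter_upwards [hfg] with n hn hnj
    rw [hn.1, hn.2, ← hnj, hP.map_emod, hQ.map_emod]
  exact ⟨hquot, hf.sub (hg.mul hquot)⟩
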